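/- Let n ≥ 2, 1 ≤ m < n, R > 0, and x ∈ ℝⁿ with |x| > R and |x|² > nR²/(2(n−m)). Set s = 2|x|² − R² and let K be the symmetric n×n matrix K = s^{−1/2}·(I − (2/s)·x xᵀ). Then K belongs to the Gårding cone K_m(n), i.e., T_p(K) > 0 for all p = 1, …, m. -/

import Mathlib

open Matrix

/-- The `p`-trace of a square real matrix: the sum of all `p × p` principal minors.
    `ptrace 0 S = 1`. -/
noncomputable def ptrace {ι : Type*} [Fintype ι] (p : ℕ) (S : Matrix ι ι ℝ) : ℝ := by
  classical
  exact ∑ t ∈ Finset.univ.powersetCard p,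
    (S.submatrix (Subtype.val : {x // x ∈ t} → ι) Subtype.val).det

/-- The Gårding cone `K_m(n)`: real symmetric `n × n` matrices with `T_p > 0`
    for `p = 1, …, m`. -/
noncomputable def gardingCone (n m : ℕ) : Set (Matrix (Fin n) (Fin n) ℝ) :=
  {S | S.IsSymm ∧ ∀ p, 1 ≤ p → p ≤ m → 0 < ptrace p S}

/-!
A principal `p × p` submatrix of `1 + u vᵀ` is again of this form, so by the matrix determinant
lemma its determinant is `1 + ∑_{i ∈ t} vᵢ uᵢ`; as each index lies in `C(n-1, p-1)` of the
`p`-subsets, `T_p(1 + u vᵀ) = C(n, p) + C(n-1, p-1) ⟪u, v⟫`. For `s = 2|x|² - R²` this gives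
`T_p(K) = s^{-p/2} C(n-1, p-1) (n/p - 2|x|²/s)`, which is positive iff `nR² < 2(n-p)|x|²`;
for `p ≤ m` that is the hypothesis on `|x|`.
-/

open Finset

lemma Finset.sum_powersetCard_sum {α M : Type*} [AddCommMonoid M] (s : Finset α) (p : ℕ)
    (f : α → M) :
    ∑ t ∈ s.powersetCard (p + 1), ∑ i ∈ t, f i = (#s - 1).choose p • ∑ i ∈ s, f i := by
  classical
  rw [sum_comm' (t' := s) (s' := fun i => (s.powersetCard (p + 1)).filter ({i} ⊆ ·))]
  · rw [smul_sum]
    refine sum_congr rfl fun i hi => ?_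
    rw [sum_const, card_filter_powersetCard_subset _ _ _ (singleton_subset_iff.2 hi)
      (by simp), card_singleton, Nat.add_sub_cancel]
  · intro t i
    simp only [mem_filter, mem_powersetCard, singleton_subset_iff]
    exact ⟨fun h => ⟨h, h.1.1 h.2⟩, And.left⟩

namespace Matrix

variable {ι R : Type*} [CommRing R] [DecidableEq ι]

lemma det_one_add_vecMulVec [Fintype ι] (u v : ι → R) :
    (1 + vecMulVec u v).det = 1 + v ⬝ᵥ u := by
  rw [vecMulVec_eq Unit, det_one_add_replicateCol_mul_replicateRow]

lemma submatrix_one_add_vecMulVec {κ : Type*} [DecidableEq κ]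
    (e : κ → ι) (he : Function.Injective e) (u v : ι → R) :
    (1 + vecMulVec u v).submatrix e e = 1 + vecMulVec (u ∘ e) (v ∘ e) := by
  ext i j
  simp [one_apply, he.eq_iff, vecMulVec_apply]

end Matrix

variable {ι : Type*} [Fintype ι]

lemma ptrace_eq_sum [DecidableEq ι] (p : ℕ) (S : Matrix ι ι ℝ) :
    ptrace p S = ∑ t ∈ univ.powersetCard p,
      (S.submatrix (Subtype.val : {x // x ∈ t} → ι) Subtype.val).det := by
  unfold ptrace
  congr!

lemma ptrace_smul (p : ℕ) (c : ℝ) (S : Matrix ι ι ℝ) : ptrace p (c • S) = c ^ p * ptrace p S := by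
  classical
  rw [ptrace_eq_sum, ptrace_eq_sum, mul_sum]
  refine sum_congr rfl fun t ht => ?_
  change (c • S.submatrix _ _).det = _
  rw [det_smul, Fintype.card_coe, (mem_powersetCard.1 ht).2]

lemma ptrace_one_add_vecMulVec [DecidableEq ι] (p : ℕ) (u v : ι → ℝ) :
    ptrace (p + 1) (1 + vecMulVec u v)
      = (Fintype.card ι).choose (p + 1) + (Fintype.card ι - 1).choose p * (v ⬝ᵥ u) := by
  rw [ptrace_eq_sum]
  simp_rw [submatrix_one_add_vecMulVec _ Subtype.val_injective, det_one_add_vecMulVec,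
    sum_add_distrib]
  simp only [dotProduct, Function.comp_apply, sum_coe_sort _ (fun i => v i * u i)]
  rw [sum_const, card_powersetCard, sum_powersetCard_sum, card_univ, nsmul_eq_mul, nsmul_eq_mul,
    mul_one]

lemma choose_succ_sub_mul_choose_pos {n p : ℕ} (hp : p < n) {t : ℝ} (ht : (p + 1) * t < n) :
    0 < (n.choose (p + 1) : ℝ) - t * (n - 1).choose p := by
  obtain ⟨k, rfl⟩ : ∃ k, n = k + 1 := ⟨n - 1, by omega⟩
  have hpascal : ((k : ℝ) + 1) * k.choose p = (k + 1).choose (p + 1) * (p + 1) := by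
    exact_mod_cast Nat.add_one_mul_choose_eq k p
  have hfactor : ((p : ℝ) + 1) * ((k + 1).choose (p + 1) - t * k.choose p)
      = k.choose p * ((k + 1 : ℕ) - (p + 1) * t) := by
    push_cast
    linear_combination -hpascal
  have hchoose : (0 : ℝ) < k.choose p := by exact_mod_cast Nat.choose_pos (by omega)
  rw [Nat.add_sub_cancel]
  exact pos_of_mul_pos_right (hfactor ▸ mul_pos hchoose (sub_pos.2 ht)) (by positivity)

theorem hyperboloid_curvature_matrix_mem_gardingCone_general (n m : ℕ) (h2 : m < n) (R : ℝ)
    (x : Fin n → ℝ)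
    (hx2 : (n : ℝ) * R ^ 2 / (2 * ((n : ℝ) - (m : ℝ))) < ∑ i, x i ^ 2) :
    (Real.sqrt (2 * ∑ i, x i ^ 2 - R ^ 2))⁻¹ •
        ((1 : Matrix (Fin n) (Fin n) ℝ)
          - (2 / (2 * ∑ i, x i ^ 2 - R ^ 2)) • Matrix.vecMulVec x x)
      ∈ gardingCone n m := by
  set A := ∑ i, x i ^ 2
  have hA : 0 ≤ A := by positivity
  have hmn : (m : ℝ) < n := by exact_mod_cast h2
  have hbound : n * R ^ 2 < 2 * (n - m) * A := by
    rwa [div_lt_iff₀ (by linarith), mul_comm A] at hx2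
  set s := 2 * A - R ^ 2
  have hs : 0 < s := by nlinarith
  have hxx : (vecMulVec x x).IsSymm := transpose_vecMulVec x x
  refine ⟨(isSymm_one.sub (hxx.smul _)).smul _, fun p hp hpm => ?_⟩
  obtain ⟨p, rfl⟩ : ∃ q, p = q + 1 := ⟨p - 1, by omega⟩
  have hrank1 : (1 : Matrix (Fin n) (Fin n) ℝ) - (2 / s) • vecMulVec x x
      = 1 + vecMulVec (-(2 / s) • x) x := by
    rw [smul_vecMulVec, neg_smul, sub_eq_add_neg]
  rw [ptrace_smul, hrank1, ptrace_one_add_vecMulVec, Fintype.card_fin]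
  refine mul_pos (pow_pos (inv_pos.2 (Real.sqrt_pos.2 hs)) _) ?_
  have hxA : x ⬝ᵥ x = A := by simp only [dotProduct, A, sq]
  rw [dotProduct_smul, hxA, smul_eq_mul]
  refine (choose_succ_sub_mul_choose_pos (t := 2 * A / s) (show p < n by omega) ?_).trans_eq
    (by ring)
  have hpm' : (p : ℝ) + 1 ≤ m := by exact_mod_cast hpm
  rw [← mul_div_assoc, div_lt_iff₀ hs]
  nlinarith

/-- let `n ≥ 2`, `1 ≤ m < n`, `R > 0`, and `x ∈ ℝⁿ` with `|x| > R` and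
`|x|² > nR²/(2(n−m))`. For `s = 2|x|² − R²`, the matrix `K = s^{-1/2} (I − (2/s) x xᵀ)`
belongs to the Gårding cone `K_m(n)`. -/
theorem hyperboloid_curvature_matrix_mem_gardingCone (n m : ℕ) (hn : 2 ≤ n)
    (h1 : 1 ≤ m) (h2 : m < n) (R : ℝ) (hR : 0 < R)
    (x : Fin n → ℝ) (hx : R ^ 2 < ∑ i, x i ^ 2)
    (hx2 : (n : ℝ) * R ^ 2 / (2 * ((n : ℝ) - (m : ℝ))) < ∑ i, x i ^ 2) :
    (Real.sqrt (2 * ∑ i, x i ^ 2 - R ^ 2))⁻¹ •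
        ((1 : Matrix (Fin n) (Fin n) ℝ)
          - (2 / (2 * ∑ i, x i ^ 2 - R ^ 2)) • Matrix.vecMulVec x x)
      ∈ gardingCone n m :=
  hyperboloid_curvature_matrix_mem_gardingCone_general n m h2 R x hx2
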